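/- Let G be a connected loopless multigraph on a finite vertex set V. Then the Laurent polynomial T_G(−t,−1/t) has top degree exactly |V|−1: the coefficient of t^{|V|−1} equals (−1)^{|V|−1}, and the coefficient of t^i is 0 for every i ≥ |V|. -/

import Mathlib

open LaurentPolynomial Finset

/-- Number of connected components of the simple graph on `V` with edge set `s`
(isolated vertices count as components). -/
noncomputable def numComponents (V : Type*) (s : Set (Sym2 V)) : ℕ :=
  Nat.card (SimpleGraph.fromEdgeSet s).ConnectedComponent

/-- The evaluation `T_G(-t, -1/t)` of the Tutte polynomial of the multigraph
given by `ε : E → Sym2 V`, as a Laurent polynomial in `ℤ[t,t⁻¹]`. -/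
noncomputable def tutteEval {V E : Type*} [Fintype V] [Fintype E]
    (ε : E → Sym2 V) : LaurentPolynomial ℤ :=
  ∑ F : Finset E,
    (-T 1 - 1) ^ (numComponents V (ε '' ↑F) - numComponents V (Set.range ε)) *
      (-T (-1) - 1) ^ (F.card + numComponents V (ε '' ↑F) - Fintype.card V)

/-- `P(m) = 1 - t⁻¹ + t⁻² - ⋯ ± t^{-(m-1)}`. -/
noncomputable def Ppoly (m : ℕ) : LaurentPolynomial ℤ :=
  ∑ i ∈ Finset.range m, (-T (-1)) ^ i

section
variable {V E : Type*} [Fintype V] [DecidableEq V] [Fintype E]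

/-- The edge set of the spanning simple graph of the multigraph `ε : E → Sym2 V`. -/
noncomputable def spanningEdges (ε : E → Sym2 V) : Finset (Sym2 V) :=
  Finset.image ε Finset.univ

/-- The multiplicity of an edge `e` of the spanning simple graph. -/
noncomputable def edgeMult (ε : E → Sym2 V) (e : Sym2 V) : ℕ :=
  Nat.card {f : E // ε f = e}

/-- `n(j)`: the number of edges of the spanning simple graph of multiplicity `≥ j`. -/
noncomputable def nMult (ε : E → Sym2 V) (j : ℕ) : ℕ :=
  Nat.card {e : Sym2 V // e ∈ spanningEdges ε ∧ j ≤ edgeMult ε e}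

/-- The number of triangles in the spanning simple graph. -/
noncomputable def numTriangles (ε : E → Sym2 V) : ℕ :=
  Nat.card {s : Finset V // s.card = 3 ∧
    ∀ u ∈ s, ∀ v ∈ s, u ≠ v → s(u, v) ∈ spanningEdges ε}
end

/-!
Since `-t - 1 = -(t + 1)` and `-t⁻¹ - 1 = -t⁻¹ (t + 1)`, the summand
`(-t - 1)^a (-t⁻¹ - 1)^b` equals `(-1)^(a+b) t^(-b) (t + 1)^(a+b)`: its coefficients vanish
above `t^a`, and the coefficient of `t^a` is `(-1)^(a+b)`. With `a = k(F) - 1`, only the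
empty edge set reaches `a = |V| - 1`, because a single non-loop edge merges two vertices and
forces `k(F) < |V|`.
-/

open Polynomial (toLaurent)

theorem LaurentPolynomial.coeff_toLaurent_natCast {R : Type*} [Semiring R]
    (p : Polynomial R) (k : ℕ) : (toLaurent p).coeff k = p.coeff k :=
  Finsupp.mapDomain_apply Nat.castEmbedding.injective _ _

noncomputable def tutteSummand (a b : ℕ) : LaurentPolynomial ℤ :=
  (-T 1 - 1) ^ a * (-T (-1) - 1) ^ b

theorem tutteSummand_eq (a b : ℕ) :
    tutteSummand a b =
      C ((-1) ^ (a + b)) * T (-b) * toLaurent ((Polynomial.X + 1) ^ (a + b)) := by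
  have hinv : (T (-1) : LaurentPolynomial ℤ) * T 1 = 1 := by rw [← T_add]; simp
  have hx : (-T 1 - 1 : LaurentPolynomial ℤ) = -1 * (T 1 + 1) := by ring
  have hy : (-T (-1) - 1 : LaurentPolynomial ℤ) = -1 * T (-1) * (T 1 + 1) := by
    linear_combination hinv
  have hTb : (T (-1) : LaurentPolynomial ℤ) ^ b = T (-b) := by simp
  rw [tutteSummand, hx, hy, mul_pow, mul_pow, mul_pow, hTb, map_pow, map_pow, map_add,
    Polynomial.toLaurent_X, map_one, map_neg, map_one]
  ring

theorem coeff_tutteSummand_natCast (a b j : ℕ) :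
    (tutteSummand a b).coeff ((a + j : ℕ) : ℤ) =
      (-1) ^ (a + b) * ((a + b).choose (a + b + j)) := by
  rw [tutteSummand_eq, ← single_eq_C_mul_T, AddMonoidAlgebra.coeff_single_mul_apply,
    show -(-(b : ℤ)) + ((a + j : ℕ) : ℤ) = ((a + b + j : ℕ) : ℤ) by push_cast; ring,
    coeff_toLaurent_natCast, Polynomial.coeff_X_add_one_pow]

theorem coeff_tutteSummand_self (a b : ℕ) : (tutteSummand a b).coeff a = (-1) ^ (a + b) := by
  simpa using coeff_tutteSummand_natCast a b 0

theorem coeff_tutteSummand_of_lt {a : ℕ} (b : ℕ) {i : ℤ} (hi : (a : ℤ) < i) :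
    (tutteSummand a b).coeff i = 0 := by
  obtain ⟨j, rfl⟩ : ∃ j : ℕ, i = ((a + (j + 1) : ℕ) : ℤ) := ⟨(i - a - 1).toNat, by omega⟩
  rw [coeff_tutteSummand_natCast, Nat.choose_eq_zero_of_lt (by omega), Nat.cast_zero, mul_zero]

section numComponents

variable (V : Type*) [Fintype V]

theorem numComponents_le_card (s : Set (Sym2 V)) : numComponents V s ≤ Fintype.card V := by
  rw [numComponents, ← Nat.card_eq_fintype_card]
  exact Nat.card_le_card_of_surjective _ Quot.mk_surjective

theorem numComponents_empty : numComponents V ∅ = Fintype.card V := by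
  rw [numComponents, ← Nat.card_eq_fintype_card, SimpleGraph.fromEdgeSet_empty]
  refine (Nat.card_eq_of_bijective _ ⟨fun u v h => ?_, Quot.mk_surjective⟩).symm
  exact SimpleGraph.reachable_bot.mp (SimpleGraph.ConnectedComponent.exact h)

variable {V}

theorem numComponents_lt_card {s : Set (Sym2 V)} {e : Sym2 V} (he : e ∈ s) (hdiag : ¬ e.IsDiag) :
    numComponents V s < Fintype.card V := by
  induction e using Sym2.inductionOn with | _ u v
  have huv : u ≠ v := fun h => hdiag (Sym2.mk_isDiag_iff.mpr h)
  have hadj : (SimpleGraph.fromEdgeSet s).Adj u v := ⟨he, huv⟩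
  refine (numComponents_le_card V s).lt_of_ne fun hcard => huv ?_
  have hbij : Function.Bijective (SimpleGraph.fromEdgeSet s).connectedComponentMk :=
    (Nat.bijective_iff_surjective_and_card _).mpr
      ⟨Quot.mk_surjective, by rw [Nat.card_eq_fintype_card, ← hcard, numComponents]⟩
  exact hbij.1 (SimpleGraph.ConnectedComponent.connectedComponentMk_eq_of_adj hadj)

end numComponents

theorem coeff_tutteEval_eq_coeff_tutteSummand {V E : Type*} [Fintype V] [Fintype E]
    {ε : E → Sym2 V} (hloopless : ∀ f : E, ¬ (ε f).IsDiag) {i : ℤ}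
    (hi : ((Fintype.card V - numComponents V (Set.range ε) : ℕ) : ℤ) ≤ i) :
    (tutteEval ε).coeff i =
      (tutteSummand (Fintype.card V - numComponents V (Set.range ε)) 0).coeff i := by
  classical
  rw [tutteEval, AddMonoidAlgebra.coeff_sum, Finsupp.finsetSum_apply,
    Finset.sum_eq_single_of_mem ∅ (Finset.mem_univ _)]
  · simp [numComponents_empty, tutteSummand]
  intro F _ hF
  obtain ⟨f, hf⟩ := Finset.nonempty_iff_ne_empty.mpr hF
  have hkF := numComponents_lt_card (Set.mem_image_of_mem ε hf) (hloopless f)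
  have hkE := numComponents_lt_card (Set.mem_range_self f) (hloopless f)
  exact coeff_tutteSummand_of_lt _ (by omega)

/-- For a connected loopless multigraph, the Laurent polynomial
`T_G(-t,-1/t)` has top degree exactly `|V| - 1`: the coefficient of `t^(|V|-1)` is
`(-1)^(|V|-1)`, and the coefficient of `t^i` vanishes for all `i ≥ |V|`. -/
theorem tutteEval_top_coeff {V E : Type*} [Fintype V] [Fintype E]
    (ε : E → Sym2 V)
    (hloopless : ∀ f : E, ¬ (ε f).IsDiag)
    (hconn : numComponents V (Set.range ε) = 1) :
    (tutteEval ε).coeff ((Fintype.card V : ℤ) - 1) = (-1) ^ (Fintype.card V - 1) ∧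
      ∀ i : ℤ, (Fintype.card V : ℤ) ≤ i → (tutteEval ε).coeff i = 0 := by
  have hV : 1 ≤ Fintype.card V := hconn ▸ numComponents_le_card V _
  have htop : ((Fintype.card V - 1 : ℕ) : ℤ) = Fintype.card V - 1 := by omega
  have hcoeff (i : ℤ) (hi : (Fintype.card V : ℤ) - 1 ≤ i) :
      (tutteEval ε).coeff i = (tutteSummand (Fintype.card V - 1) 0).coeff i := by
    rw [coeff_tutteEval_eq_coeff_tutteSummand hloopless (by omega), hconn]
  refine ⟨?_, fun i hi => ?_⟩
  · rw [hcoeff _ le_rfl, ← htop, coeff_tutteSummand_self, add_zero]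
  · rw [hcoeff i (by omega), coeff_tutteSummand_of_lt _ (by omega)]
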